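/- arXiv:1906.05089 — 2 statements merged into one kernel-verified Lean document; each statement's English description precedes it below -/
import Mathlib

section
/- For every integer n ≥ 4, the upper broadcast domination number of the cycle C_n equals 2(⌊n/2⌋ − 1), i.e. Γ_b(C_n) = 2(⌊n/2⌋ − 1). -/
open SimpleGraph

namespace Broadcast

variable {V : Type*} [Fintype V]

/-- The eccentricity of a vertex: the maximum distance from `v` to any vertex. -/
noncomputable def ecc (G : SimpleGraph V) (v : V) : ℕ :=
  Finset.univ.sup fun u => G.dist v u

/-- A broadcast on `G`: `f v ≤ e_G(v)` for every vertex `v`. -/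
def IsBroadcast (G : SimpleGraph V) (f : V → ℕ) : Prop :=
  ∀ v, f v ≤ ecc G v

/-- The cost of a broadcast. -/
def cost (f : V → ℕ) : ℕ := ∑ v, f v

/-- `hears G f u` is H_f(u): the set of f-broadcast vertices `v` with `d(u,v) ≤ f v`. -/
def hears (G : SimpleGraph V) (f : V → ℕ) (u : V) : Set V :=
  {v | 1 ≤ f v ∧ G.dist u v ≤ f v}

/-- A dominating broadcast: every vertex hears some broadcast vertex. -/
def IsDominating (G : SimpleGraph V) (f : V → ℕ) : Prop :=
  IsBroadcast G f ∧ ∀ u, (hears G f u).Nonempty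

/-- A minimal dominating broadcast. -/
def IsMinimalDominating (G : SimpleGraph V) (f : V → ℕ) : Prop :=
  IsDominating G f ∧ ∀ g, IsDominating G g → (∀ v, g v ≤ f v) → g = f

/-- The broadcast domination number γ_b: minimum cost of a dominating broadcast. -/
noncomputable def broadcastDomination (G : SimpleGraph V) : ℕ :=
  sInf {c | ∃ f, IsDominating G f ∧ cost f = c}

/-- The upper broadcast domination number Γ_b: maximum cost of a minimal dominating broadcast. -/
noncomputable def upperBroadcastDomination (G : SimpleGraph V) : ℕ :=
  sSup {c | ∃ f, IsMinimalDominating G f ∧ cost f = c}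

/-- The private f-neighborhood PN_f(v): vertices hearing only `v`. -/
def privateNbhd (G : SimpleGraph V) (f : V → ℕ) (v : V) : Set V :=
  {u | hears G f u = {v}}

open Classical in
/-- The private f-border PB_f(v). -/
noncomputable def privateBorder (G : SimpleGraph V) (f : V → ℕ) (v : V) : Set V :=
  if f v = 1 ∧ privateNbhd G f v = {v} then {v}
  else {u | u ∈ privateNbhd G f v ∧ G.dist u v = f v}

/-- An irredundant broadcast: every broadcast vertex has a nonempty private border. -/
def IsIrredundant (G : SimpleGraph V) (f : V → ℕ) : Prop :=
  IsBroadcast G f ∧ ∀ v, 1 ≤ f v → (privateBorder G f v).Nonempty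

/-- A maximal irredundant broadcast. -/
def IsMaximalIrredundant (G : SimpleGraph V) (f : V → ℕ) : Prop :=
  IsIrredundant G f ∧ ∀ g, IsIrredundant G g → (∀ v, f v ≤ g v) → g = f

/-- The upper broadcast irredundance number IR_b: maximum cost of an irredundant broadcast. -/
noncomputable def upperBroadcastIrredundance (G : SimpleGraph V) : ℕ :=
  sSup {c | ∃ f, IsIrredundant G f ∧ cost f = c}

/-- The broadcast irredundance number ir_b: minimum cost of a maximal irredundant broadcast. -/
noncomputable def broadcastIrredundance (G : SimpleGraph V) : ℕ :=
  sInf {c | ∃ f, IsMaximalIrredundant G f ∧ cost f = c}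

/-- An independent broadcast: every broadcast vertex hears only itself, i.e. |H_f(v)| = 1. -/
def IsIndependent (G : SimpleGraph V) (f : V → ℕ) : Prop :=
  IsBroadcast G f ∧ ∀ v, 1 ≤ f v → hears G f v = {v}

/-- A maximal independent broadcast. -/
def IsMaximalIndependent (G : SimpleGraph V) (f : V → ℕ) : Prop :=
  IsIndependent G f ∧ ∀ g, IsIndependent G g → (∀ v, f v ≤ g v) → g = f

/-- The broadcast independence number β_b: maximum cost of an independent broadcast. -/
noncomputable def broadcastIndependence (G : SimpleGraph V) : ℕ :=
  sSup {c | ∃ f, IsIndependent G f ∧ cost f = c}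

/-- The lower broadcast independence number i_b: minimum cost of a maximal independent broadcast. -/
noncomputable def lowerBroadcastIndependence (G : SimpleGraph V) : ℕ :=
  sInf {c | ∃ f, IsMaximalIndependent G f ∧ cost f = c}

/-- A packing broadcast: every vertex hears at most one broadcast vertex. -/
def IsPacking (G : SimpleGraph V) (f : V → ℕ) : Prop :=
  IsBroadcast G f ∧ ∀ u, (hears G f u).Subsingleton

/-- A maximal packing broadcast. -/
def IsMaximalPacking (G : SimpleGraph V) (f : V → ℕ) : Prop :=
  IsPacking G f ∧ ∀ g, IsPacking G g → (∀ v, f v ≤ g v) → g = f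

/-- The broadcast packing number P_b: maximum cost of a packing broadcast. -/
noncomputable def broadcastPacking (G : SimpleGraph V) : ℕ :=
  sSup {c | ∃ f, IsPacking G f ∧ cost f = c}

/-- The lower broadcast packing number p_b: minimum cost of a maximal packing broadcast. -/
noncomputable def lowerBroadcastPacking (G : SimpleGraph V) : ℕ :=
  sInf {c | ∃ f, IsMaximalPacking G f ∧ cost f = c}

end Broadcast

/-!
For `n = 2k + r` with `r < 2`, the vertices `0` and `r + 1`, each broadcasting with strength
`k - 1`, dominate the cycle, and each of them is heard alone by a vertex at distance exactly
`k - 1`; such a broadcast is minimal dominating and costs `2(k - 1)`.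

Conversely, minimality means every broadcasting vertex `v` is heard alone by some vertex `u`, with
`d(u, v) = f v` unless `f v = 1` and `u = v`. Hence, if at least two vertices broadcast, no `f v`
reaches the eccentricity `k` (the other vertex's private vertex would hear `v`), which settles the
case of exactly two broadcasting vertices. With three or more, the geodesics from each `v` to its
private vertex (the edge `v, v + 1` in the exceptional case) are pairwise disjoint and have
`f v + 1` vertices, so `σ(f) + |V_f^+| ≤ n` and `σ(f) ≤ n - 3`. A single broadcasting vertex costs at
most `k`.
-/

open Finset

namespace SimpleGraph

variable {V : Type*} {G : SimpleGraph V}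

lemma Connected.exists_finset_card_eq_dist_add_one [DecidableEq V] (hG : G.Connected) (u v : V) :
    ∃ S : Finset V, #S = G.dist u v + 1 ∧ ∀ x ∈ S, G.dist u x + G.dist x v = G.dist u v := by
  obtain ⟨p, hp, hlen⟩ := hG.exists_path_of_dist u v
  refine ⟨p.support.toFinset, ?_, fun x hx => ?_⟩
  · rw [List.toFinset_card_of_nodup hp.support_nodup, p.length_support, hlen]
  obtain ⟨q, r, rfl⟩ := Walk.mem_support_iff_exists_append.1 (List.mem_toFinset.1 hx)
  have := hG.dist_triangle (u := u) (v := x) (w := v)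
  have := dist_le q
  have := dist_le r
  rw [Walk.length_append] at hlen
  omega

end SimpleGraph

namespace Broadcast

variable {V : Type*} {G : SimpleGraph V} {f : V → ℕ}

lemma one_le_of_hears_eq_singleton {u v : V} (h : hears G f u = {v}) : 1 ≤ f v :=
  (h.symm ▸ Set.mem_singleton v : v ∈ hears G f u).1

lemma lt_dist_of_hears_eq_singleton {u v w : V} (h : hears G f u = {v}) (hw : 1 ≤ f w)
    (hwv : w ≠ v) : f w < G.dist u w := by
  by_contra! hle
  have hwu : w ∈ hears G f u := ⟨hw, hle⟩
  rw [h] at hwu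
  exact hwv hwu

section PrivateSet

variable [DecidableEq V] {σ : V → V} {v w : V} {S T : Finset V}

/-- The vertices charged to the broadcasting vertex `v` in the count `cost f + |V_f^+| ≤ |V|`. -/
def IsPrivateSet (G : SimpleGraph V) (σ : V → V) (f : V → ℕ) (v : V) (S : Finset V) : Prop :=
  (∃ u, hears G f u = {v} ∧ ∀ x ∈ S, G.dist v x + G.dist x u = f v) ∨
    (f v = 1 ∧ hears G f v = {v} ∧ S = {v, σ v})

lemma IsPrivateSet.one_le (hS : IsPrivateSet G σ f v S) : 1 ≤ f v := by
  rcases hS with ⟨u, hu, -⟩ | ⟨h, -⟩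
  · exact one_le_of_hears_eq_singleton hu
  · exact h.ge

lemma IsPrivateSet.dist_le (hσ : ∀ v, G.Adj v (σ v)) (hS : IsPrivateSet G σ f v S) {x : V}
    (hx : x ∈ S) : G.dist v x ≤ f v := by
  rcases hS with ⟨u, -, hSu⟩ | ⟨h1, -, rfl⟩
  · have := hSu x hx
    omega
  · rcases mem_insert.1 hx with rfl | hx
    · simp
    · rw [mem_singleton.1 hx, SimpleGraph.dist_eq_one_iff_adj.2 (hσ v), h1]

lemma disjoint_pair_of_isPrivateSet (hG : G.Connected) (hσ : σ.Injective)
    (hadj : ∀ v, G.Adj v (σ v)) (hv1 : f v = 1) (hv : hears G f v = {v})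
    (hT : IsPrivateSet G σ f w T) (hvw : v ≠ w) : Disjoint {v, σ v} T := by
  have hfar := lt_dist_of_hears_eq_singleton hv hT.one_le hvw.symm
  rw [disjoint_insert_left, disjoint_singleton_left]
  refine ⟨fun hvT => ?_, fun hσT => ?_⟩
  · have := hT.dist_le hadj hvT
    rw [SimpleGraph.dist_comm] at this
    omega
  have hle := hT.dist_le hadj hσT
  have hstep : G.dist v w ≤ G.dist v (σ v) + G.dist (σ v) w := hG.dist_triangle
  rw [SimpleGraph.dist_eq_one_iff_adj.2 (hadj v), SimpleGraph.dist_comm (u := σ v)] at hstep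
  rcases hT with ⟨u, hu, hTu⟩ | ⟨hw1, -, rfl⟩
  · -- `σ v` is at distance `f w` from `w` on a geodesic to `u`, so it is `u`, which hears `v`.
    have h0 : G.dist (σ v) u = 0 := by
      have := hTu (σ v) hσT
      linarith
    have hσu : σ v = u := hG.dist_eq_zero_iff.1 h0
    have hvu : v ∈ hears G f u := ⟨hv1.ge, by
      rw [← hσu, SimpleGraph.dist_comm, SimpleGraph.dist_eq_one_iff_adj.2 (hadj v), hv1]⟩
    simp [hu, hvw] at hvu
  · rcases mem_insert.1 hσT with h | h
    · subst h
      rw [SimpleGraph.dist_eq_one_iff_adj.2 (hadj v)] at hfar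
      omega
    · exact hvw (hσ (mem_singleton.1 h))

lemma IsPrivateSet.disjoint (hG : G.Connected) (hσ : σ.Injective) (hadj : ∀ v, G.Adj v (σ v))
    (hS : IsPrivateSet G σ f v S) (hT : IsPrivateSet G σ f w T) (hvw : v ≠ w) : Disjoint S T := by
  rcases hS with ⟨u, hu, hSu⟩ | ⟨hv1, hv, rfl⟩
  · rcases hT with ⟨u', hu', hTu'⟩ | ⟨hw1, hw, rfl⟩
    · rw [Finset.disjoint_left]
      intro x hxS hxT
      have h1 := hSu x hxS
      have h2 := hTu' x hxT
      have p1 := lt_dist_of_hears_eq_singleton hu (one_le_of_hears_eq_singleton hu') hvw.symm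
      have p2 := lt_dist_of_hears_eq_singleton hu' (one_le_of_hears_eq_singleton hu) hvw
      have t1 : G.dist u w ≤ G.dist u x + G.dist x w := hG.dist_triangle
      have t2 : G.dist u' v ≤ G.dist u' x + G.dist x v := hG.dist_triangle
      have := SimpleGraph.dist_comm (G := G) (u := u) (v := x)
      have := SimpleGraph.dist_comm (G := G) (u := u') (v := x)
      have := SimpleGraph.dist_comm (G := G) (u := x) (v := v)
      have := SimpleGraph.dist_comm (G := G) (u := x) (v := w)
      omega
    · exact (disjoint_pair_of_isPrivateSet hG hσ hadj hw1 hw (.inl ⟨u, hu, hSu⟩) hvw.symm).symm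
  · exact disjoint_pair_of_isPrivateSet hG hσ hadj hv1 hv hT hvw

end PrivateSet

variable [Fintype V]

def broadcastVertices (f : V → ℕ) : Finset V := {v | 1 ≤ f v}

@[simp]
lemma mem_broadcastVertices {v : V} : v ∈ broadcastVertices f ↔ 1 ≤ f v := by
  simp [broadcastVertices]

lemma cost_eq_sum_broadcastVertices (f : V → ℕ) : cost f = ∑ v ∈ broadcastVertices f, f v :=
  (sum_filter_of_ne fun _ _ h => Nat.one_le_iff_ne_zero.2 h).symm

lemma dist_le_ecc (G : SimpleGraph V) (v u : V) : G.dist v u ≤ ecc G v :=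
  le_sup (mem_univ u)

lemma IsMinimalDominating.exists_hears_eq_singleton (hf : IsMinimalDominating G f) {v : V}
    (hv : 1 ≤ f v) : ∃ u, hears G f u = {v} ∧ (G.dist u v = f v ∨ f v = 1) := by
  classical
  set g := Function.update f v (f v - 1)
  have hgf : ∀ x, g x ≤ f x := by
    intro x
    by_cases hx : x = v <;> simp [g, hx]
  have hg : ∀ u, ∀ w ≠ v, w ∈ hears G g u ↔ w ∈ hears G f u := by
    intro u w hw
    simp [hears, g, hw]
  obtain ⟨u, hu⟩ : ∃ u, hears G g u = ∅ := by
    by_contra! h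
    have := congrFun (hf.2 g ⟨fun x => (hgf x).trans (hf.1.1 x), h⟩ hgf) v
    simp [g] at this
    omega
  have hsub : hears G f u ⊆ {v} := fun w hw => by
    by_contra hwv
    simpa [hu] using (hg u w hwv).2 hw
  obtain ⟨w, hw⟩ := hf.1.2 u
  have hvu : v ∈ hears G f u := hsub hw ▸ hw
  refine ⟨u, hsub.antisymm (Set.singleton_subset_iff.2 hvu), ?_⟩
  have : v ∉ hears G g u := by simp [hu]
  simp only [hears, g, Set.mem_ofPred_eq, Function.update_self] at this hvu
  omega

lemma IsMinimalDominating.lt_ecc (hf : IsMinimalDominating G f) {v w : V} (hvw : v ≠ w)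
    (hv : 1 ≤ f v) (hw : 1 ≤ f w) : f w < ecc G w := by
  obtain ⟨u, hu, -⟩ := hf.exists_hears_eq_singleton hv
  have := lt_dist_of_hears_eq_singleton hu hw hvw.symm
  have := dist_le_ecc G w u
  rw [SimpleGraph.dist_comm] at this
  omega

lemma isMinimalDominating_of_hears (hdom : ∀ u, (hears G f u).Nonempty)
    (hpriv : ∀ v, 1 ≤ f v → ∃ u, hears G f u = {v} ∧ G.dist u v = f v) :
    IsMinimalDominating G f := by
  have hbroad : IsBroadcast G f := fun v => by
    rcases Nat.eq_zero_or_pos (f v) with h | h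
    · simp [h]
    obtain ⟨u, -, huv⟩ := hpriv v h
    rw [← huv, SimpleGraph.dist_comm]
    exact dist_le_ecc G v u
  refine ⟨⟨hbroad, hdom⟩, fun g hg hgf => funext fun v => (hgf v).antisymm (not_lt.1 fun hlt => ?_)⟩
  obtain ⟨u, hu, huv⟩ := hpriv v (by omega)
  obtain ⟨w, hw1, hw2⟩ := hg.2 u
  have hwv : w ∈ hears G f u := ⟨hw1.trans (hgf w), hw2.trans (hgf w)⟩
  rw [hu, Set.mem_singleton_iff] at hwv
  subst hwv
  omega

variable [DecidableEq V] {σ : V → V}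

lemma cost_ite_mem (D : Finset V) (p : ℕ) : cost (fun x => if x ∈ D then p else 0) = #D * p := by
  simp [cost, sum_ite_mem]

lemma isMinimalDominating_ite_mem {D : Finset V} {p : ℕ} (hp : 1 ≤ p)
    (hcover : ∀ u, ∃ a ∈ D, G.dist u a ≤ p)
    (hpriv : ∀ a ∈ D, ∃ u, G.dist u a = p ∧ ∀ b ∈ D, b ≠ a → p < G.dist u b) :
    IsMinimalDominating G (fun x => if x ∈ D then p else 0) := by
  have hears_eq : ∀ u, hears G (fun x => if x ∈ D then p else 0) u = {a | a ∈ D ∧ G.dist u a ≤ p} := by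
    intro u
    ext a
    by_cases ha : a ∈ D <;> simp [hears, ha, hp]
  refine isMinimalDominating_of_hears (fun u => ?_) (fun a ha => ?_)
  · obtain ⟨a, ha, hua⟩ := hcover u
    exact ⟨a, by simp [hears_eq, ha, hua]⟩
  · have ha : a ∈ D := by by_contra h; simp [h] at ha
    obtain ⟨u, hua, hfar⟩ := hpriv a ha
    refine ⟨u, ?_, by simp [ha, hua]⟩
    rw [hears_eq]
    ext b
    simp only [Set.mem_singleton_iff]
    constructor
    · rintro ⟨hb, hub⟩
      by_contra hba
      exact absurd (hfar b hb hba) (not_lt.2 hub)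
    · rintro rfl
      exact ⟨ha, hua.le⟩

lemma IsMinimalDominating.exists_isPrivateSet (hG : G.Connected) (hadj : ∀ v, G.Adj v (σ v))
    (hf : IsMinimalDominating G f) (hv : 1 ≤ f v) :
    ∃ S, #S = f v + 1 ∧ IsPrivateSet G σ f v S := by
  obtain ⟨u, hu, h⟩ := hf.exists_hears_eq_singleton hv
  have hle : G.dist u v ≤ f v := (hu.symm ▸ Set.mem_singleton v : v ∈ hears G f u).2
  by_cases huv : G.dist u v = f v
  · obtain ⟨S, hcard, hS⟩ := hG.exists_finset_card_eq_dist_add_one v u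
    rw [SimpleGraph.dist_comm, huv] at hcard hS
    exact ⟨S, hcard, .inl ⟨u, hu, hS⟩⟩
  · have h1 : f v = 1 := h.resolve_left huv
    have : u = v := hG.dist_eq_zero_iff.1 (by omega)
    subst this
    exact ⟨{u, σ u}, by rw [card_pair (hadj u).ne, h1], .inr ⟨h1, hu, rfl⟩⟩

theorem IsMinimalDominating.cost_add_card_broadcastVertices_le (hG : G.Connected)
    (hσ : σ.Injective) (hadj : ∀ v, G.Adj v (σ v)) (hf : IsMinimalDominating G f) :
    cost f + #(broadcastVertices f) ≤ Fintype.card V := by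
  have : ∀ v ∈ broadcastVertices f, ∃ S, #S = f v + 1 ∧ IsPrivateSet G σ f v S :=
    fun v hv => hf.exists_isPrivateSet hG hadj (mem_broadcastVertices.1 hv)
  choose! S hS using this
  calc cost f + #(broadcastVertices f) = ∑ v ∈ broadcastVertices f, #(S v) := by
        rw [cost_eq_sum_broadcastVertices, card_eq_sum_ones, ← sum_add_distrib]
        exact sum_congr rfl fun v hv => (hS v hv).1.symm
    _ = #((broadcastVertices f).biUnion S) :=
        (card_biUnion fun v hv w hw hvw => (hS v hv).2.disjoint hG hσ hadj (hS w hw).2 hvw).symm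
    _ ≤ Fintype.card V := card_le_univ _

end Broadcast

namespace SimpleGraph

variable {n : ℕ}

lemma val_eq_of_cycleGraph_adj {u v : Fin n} (h : (cycleGraph n).Adj u v) :
    u.val + 1 = v.val ∨ v.val + 1 = u.val ∨ u.val + 1 = v.val + n ∨ v.val + 1 = u.val + n := by
  rw [cycleGraph_adj'] at h
  have := @Fin.sub_val_of_le n u v
  have := @Fin.sub_val_of_le n v u
  have := (@Fin.coe_sub_iff_lt n u v).2
  have := (@Fin.coe_sub_iff_lt n v u).2
  omega

lemma cycleGraph_adj_add_one (v : Fin (n + 2)) : (cycleGraph (n + 2)).Adj v (v + 1) := by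
  simp [cycleGraph_adj]

lemma le_length_of_cycleGraph_walk {u v : Fin n} (p : (cycleGraph n).Walk u v) :
    min (u.val.dist v) (n - u.val.dist v) ≤ p.length := by
  induction p with
  | nil => simp
  | cons h p ih =>
    have := val_eq_of_cycleGraph_adj h
    rw [Walk.length_cons]
    unfold Nat.dist at ih ⊢
    omega

variable [NeZero n]

open scoped Fin.NatCast in
lemma cycleGraph_dist_le_val_sub (u v : Fin n) : (cycleGraph n).dist u v ≤ (v - u).val := by
  suffices h : ∀ k : ℕ, (cycleGraph n).dist u (u + k) ≤ k by
    simpa using h (v - u).val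
  intro k
  induction k with
  | zero => simp
  | succ k ih =>
    have hstep : (cycleGraph n).dist (u + k) (u + k + 1) ≤ 1 := by
      rcases n with _ | _ | n
      · exact (NeZero.ne 0 rfl).elim
      · simp
      · exact (dist_eq_one_iff_adj.2 (cycleGraph_adj_add_one _)).le
    have := (cycleGraph_preconnected u (u + k)).dist_triangle_left (u + k + 1)
    rw [Nat.cast_succ, ← add_assoc]
    omega

theorem cycleGraph_dist (u v : Fin n) :
    (cycleGraph n).dist u v = min (u.val.dist v) (n - u.val.dist v) := by
  apply le_antisymm
  · have h1 := cycleGraph_dist_le_val_sub u v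
    have h2 := cycleGraph_dist_le_val_sub v u
    rw [dist_comm] at h2
    have := @Fin.sub_val_of_le n u v
    have := @Fin.sub_val_of_le n v u
    have := (@Fin.coe_sub_iff_lt n u v).2
    have := (@Fin.coe_sub_iff_lt n v u).2
    unfold Nat.dist
    omega
  · obtain ⟨p, hp⟩ := (cycleGraph_preconnected u v).exists_walk_length_eq_dist
    exact hp ▸ le_length_of_cycleGraph_walk p

end SimpleGraph

namespace Broadcast

variable {n : ℕ}

lemma ecc_cycleGraph_le [NeZero n] (v : Fin n) : ecc (cycleGraph n) v ≤ n / 2 :=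
  Finset.sup_le fun u _ => by
    rw [cycleGraph_dist, Nat.dist]
    omega

theorem cost_le_of_isMinimalDominating_cycleGraph (hn : 4 ≤ n) {f : Fin n → ℕ}
    (hf : IsMinimalDominating (cycleGraph n) f) : cost f ≤ 2 * (n / 2 - 1) := by
  obtain ⟨m, rfl⟩ : ∃ m, n = m + 2 := ⟨n - 2, by omega⟩
  have hcount := hf.cost_add_card_broadcastVertices_le cycleGraph_connected
    (add_left_injective 1) cycleGraph_adj_add_one
  rw [Fintype.card_fin] at hcount
  obtain hP | hP | hP : #(broadcastVertices f) ≤ 1 ∨ #(broadcastVertices f) = 2 ∨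
      3 ≤ #(broadcastVertices f) := by omega
  · have : cost f ≤ #(broadcastVertices f) * ((m + 2) / 2) := by
      rw [cost_eq_sum_broadcastVertices, ← smul_eq_mul]
      exact sum_le_card_nsmul _ _ _ fun v _ => (hf.1.1 v).trans (ecc_cycleGraph_le v)
    have := Nat.mul_le_mul_right ((m + 2) / 2) hP
    omega
  · have hlt : ∀ v ∈ broadcastVertices f, f v ≤ (m + 2) / 2 - 1 := fun v hv => by
      obtain ⟨w, hw, hwv⟩ := exists_mem_ne (by omega : 1 < #(broadcastVertices f)) v
      have := hf.lt_ecc hwv (mem_broadcastVertices.1 hw) (mem_broadcastVertices.1 hv)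
      have := ecc_cycleGraph_le v
      omega
    calc cost f = ∑ v ∈ broadcastVertices f, f v := cost_eq_sum_broadcastVertices f
      _ ≤ #(broadcastVertices f) • ((m + 2) / 2 - 1) := sum_le_card_nsmul _ _ _ hlt
      _ = 2 * ((m + 2) / 2 - 1) := by rw [hP, smul_eq_mul]
  · omega

theorem exists_isMinimalDominating_cycleGraph_cost_eq (hn : 4 ≤ n) :
    ∃ f, IsMinimalDominating (cycleGraph n) f ∧ cost f = 2 * (n / 2 - 1) := by
  have : NeZero n := ⟨by omega⟩
  let a : Fin n := ⟨0, by omega⟩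
  let b : Fin n := ⟨n % 2 + 1, by omega⟩
  have hab : a ≠ b := by simp [a, b, Fin.ext_iff]
  refine ⟨_, isMinimalDominating_ite_mem (D := {a, b}) (p := n / 2 - 1) (by omega) ?_ ?_, ?_⟩
  · intro u
    simp only [mem_insert, mem_singleton, exists_eq_or_imp, exists_eq_left, cycleGraph_dist, Nat.dist, a, b]
    omega
  · simp only [mem_insert, mem_singleton, forall_eq_or_imp, forall_eq]
    refine ⟨⟨⟨n / 2 + n % 2 + 1, by omega⟩, ?_⟩, ⟨⟨n / 2 + n % 2, by omega⟩, ?_⟩⟩ <;>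
      simp only [cycleGraph_dist, Nat.dist, a, b] <;> omega
  · rw [cost_ite_mem, card_pair hab]

end Broadcast

open Broadcast in
/-- For every integer n ≥ 4, Γ_b(C_n) = 2(⌊n/2⌋ − 1). -/
theorem upperBroadcastDomination_cycleGraph (n : ℕ) (hn : 4 ≤ n) :
    upperBroadcastDomination (SimpleGraph.cycleGraph n) = 2 * (n / 2 - 1) := by
  obtain ⟨f, hf, hcost⟩ := exists_isMinimalDominating_cycleGraph_cost_eq hn
  have hub : ∀ c ∈ {c | ∃ f, IsMinimalDominating (SimpleGraph.cycleGraph n) f ∧ cost f = c},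
      c ≤ 2 * (n / 2 - 1) := by
    rintro c ⟨g, hg, rfl⟩
    exact cost_le_of_isMinimalDominating_cycleGraph hn hg
  exact le_antisymm (csSup_le ⟨_, f, hf, hcost⟩ hub) (le_csSup ⟨_, hub⟩ ⟨f, hf, hcost⟩)
end

section
/- For every integer n ≥ 3, there exists a maximal irredundant broadcast f on the path P_n whose cost equals the broadcast irredundance number ir_b(P_n) and such that H_f(x_1) ≠ ∅ and H_f(x_n) ≠ ∅, i.e. both endpoints of P_n are f-dominated. -/
open SimpleGraph

/-!
Put strength `1` on every third vertex `x_2, x_5, …`, and on `x_n` when `n ≡ 1 [MOD 3]`. This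
broadcast costs `⌈n / 3⌉`, every vertex (in particular each endpoint) hears a strength-`1` vertex
within distance `1`, and it is irredundant. It is maximal: all private neighbours of a raised
vertex `v` hear the same strength-`1` vertex, which must be `v` itself, so none lies at distance
`≥ 2` from `v`.

Conversely let `f` be maximal irredundant. Raising an undominated vertex `u` to strength `1` must
empty the private border of some broadcast vertex `w`; so `u` lies just beyond that border (it is
adjacent to every border vertex and farther from `w`), and if `f w = 1` then `w` hears a second
broadcast vertex. On a path `u` is determined by `w`, whence
`#undominated ≤ #{w | 2 ≤ f w} + #{x | 2 ≤ |H_f(x)|}`, while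
`#dominated + #{x | 2 ≤ |H_f(x)|} ≤ ∑ₓ |H_f(x)| ≤ ∑ᵥ (2 f v + 1)` over broadcast vertices.
Adding up, `n ≤ 3 σ(f)`.
-/

namespace Broadcast

open Function

variable {V : Type*} {G : SimpleGraph V} {f g : V → ℕ} {u v w x : V}

theorem mem_hears : v ∈ hears G f u ↔ 1 ≤ f v ∧ G.dist u v ≤ f v := Iff.rfl

theorem mem_hears_self (h : 1 ≤ f v) : v ∈ hears G f v := ⟨h, by simp⟩

theorem mem_privateNbhd : u ∈ privateNbhd G f v ↔ hears G f u = {v} := Iff.rfl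

theorem mem_hears_of_mem_privateNbhd (h : u ∈ privateNbhd G f v) : v ∈ hears G f u := by
  rw [mem_privateNbhd.1 h]; rfl

theorem eq_of_mem_hears_of_mem_privateNbhd (h : u ∈ privateNbhd G f v)
    (hw : w ∈ hears G f u) : w = v := by
  rwa [mem_privateNbhd.1 h] at hw

theorem privateBorder_nonempty_iff :
    (privateBorder G f v).Nonempty ↔
      (f v = 1 ∧ privateNbhd G f v = {v}) ∨ ∃ u ∈ privateNbhd G f v, G.dist u v = f v := by
  unfold privateBorder
  split_ifs with h
  · simp [h]
  · simp only [h, false_or]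
    rfl

theorem privateBorder_eq_empty_iff :
    privateBorder G f v = ∅ ↔
      (f v = 1 → privateNbhd G f v ≠ {v}) ∧ ∀ u ∈ privateNbhd G f v, G.dist u v ≠ f v := by
  rw [← Set.not_nonempty_iff_eq_empty, privateBorder_nonempty_iff]
  simp only [not_or, not_and, not_exists]

theorem eq_zero_of_hears_eq_empty (hu : hears G f u = ∅) : f u = 0 :=
  Nat.eq_zero_of_not_pos fun h => Set.notMem_empty u (hu ▸ mem_hears_self h)

theorem lt_dist_of_hears_eq_empty (hu : hears G f u = ∅) (hw : 1 ≤ f w) : f w < G.dist u w :=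
  Nat.lt_of_not_le fun h => Set.notMem_empty w (hu ▸ ⟨hw, h⟩)

section Update

variable [DecidableEq V]

theorem mem_hears_update_one (hfu : f u = 0) :
    v ∈ hears G (update f u 1) x ↔ v ∈ hears G f x ∨ v = u ∧ G.dist x u ≤ 1 := by
  by_cases hvu : v = u
  · subst hvu
    simp [mem_hears, hfu]
  · simp [mem_hears, hvu]

theorem hears_update_one_of_one_lt_dist (hfu : f u = 0) (hx : 1 < G.dist x u) :
    hears G (update f u 1) x = hears G f x :=
  Set.ext fun _ => (mem_hears_update_one hfu).trans (or_iff_left fun h => by omega)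

theorem mem_privateNbhd_update_one (hfu : f u = 0) (hwu : w ≠ u) :
    x ∈ privateNbhd G (update f u 1) w ↔ x ∈ privateNbhd G f w ∧ 1 < G.dist x u := by
  by_cases hx : 1 < G.dist x u
  · simp only [mem_privateNbhd, hears_update_one_of_one_lt_dist hfu hx, hx, and_true]
  · simp only [hx, and_false, iff_false]
    intro h
    exact hwu.symm <| eq_of_mem_hears_of_mem_privateNbhd h <|
      (mem_hears_update_one hfu).2 (Or.inr ⟨rfl, by omega⟩)

theorem privateBorder_update_one_self_nonempty (hG : G.Connected) (hu : hears G f u = ∅) :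
    (privateBorder G (update f u 1) u).Nonempty := by
  have hfu := eq_zero_of_hears_eq_empty hu
  have hself : u ∈ privateNbhd G (update f u 1) u := by
    refine Set.eq_singleton_iff_unique_mem.2
      ⟨(mem_hears_update_one hfu).2 (Or.inr ⟨rfl, by simp⟩), fun v hv => ?_⟩
    rcases (mem_hears_update_one hfu).1 hv with h | h
    · exact absurd (hu ▸ h) (Set.notMem_empty v)
    · exact h.1
  rw [privateBorder_nonempty_iff, update_self]
  by_cases hPN : privateNbhd G (update f u 1) u = {u}
  · exact Or.inl ⟨rfl, hPN⟩
  · obtain ⟨x, hx, hxu⟩ : ∃ x ∈ privateNbhd G (update f u 1) u, x ≠ u := by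
      by_contra! h
      exact hPN (Set.eq_singleton_iff_unique_mem.2 ⟨hself, h⟩)
    have hxu' := (mem_hears_of_mem_privateNbhd hx).2
    rw [update_self] at hxu'
    exact Or.inr ⟨x, hx, by have := hG.pos_dist_of_ne hxu; omega⟩

theorem adj_of_privateBorder_update_one_eq_empty (hG : G.Connected) (hu : hears G f u = ∅)
    (hwu : w ≠ u) (hPB : privateBorder G (update f u 1) w = ∅) (hx : x ∈ privateNbhd G f w)
    (hxw : G.dist x w = f w) : G.Adj x u := by
  have hfu := eq_zero_of_hears_eq_empty hu
  have hxu : x ≠ u := by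
    rintro rfl
    exact Set.notMem_empty w (hu ▸ mem_hears_of_mem_privateNbhd hx)
  have hle : G.dist x u ≤ 1 := by
    by_contra! h
    refine (privateBorder_eq_empty_iff.1 hPB).2 x
      ((mem_privateNbhd_update_one hfu hwu).2 ⟨hx, h⟩) ?_
    rwa [update_of_ne hwu]
  exact dist_eq_one_iff_adj.1 (by have := hG.pos_dist_of_ne hxu; omega)

theorem exists_ne_mem_hears_of_privateBorder_update_one_eq_empty (hG : G.Connected)
    (hu : hears G f u = ∅) (hwu : w ≠ u) (hPB : privateBorder G (update f u 1) w = ∅)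
    (hw1 : f w = 1) : ∃ w' ≠ w, w' ∈ hears G f w := by
  have hfu := eq_zero_of_hears_eq_empty hu
  have hwu' : 1 < G.dist w u := by
    have := lt_dist_of_hears_eq_empty hu hw1.ge
    rwa [dist_comm, hw1] at this
  by_contra! hw
  have hwPN : w ∈ privateNbhd G f w :=
    Set.eq_singleton_iff_unique_mem.2 ⟨mem_hears_self hw1.ge, fun w' h => by_contra (hw w' · h)⟩
  refine (privateBorder_eq_empty_iff.1 hPB).1 (by rwa [update_of_ne hwu]) <|
    Set.eq_singleton_iff_unique_mem.2 ⟨(mem_privateNbhd_update_one hfu hwu).2 ⟨hwPN, hwu'⟩, ?_⟩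
  intro x hx
  obtain ⟨hxf, hxu⟩ := (mem_privateNbhd_update_one hfu hwu).1 hx
  by_contra hxw
  have hxw' : G.dist x w = f w := by
    have := (mem_hears_of_mem_privateNbhd hxf).2
    have := hG.pos_dist_of_ne hxw
    omega
  have := dist_eq_one_iff_adj.2 (adj_of_privateBorder_update_one_eq_empty hG hu hwu hPB hxf hxw')
  omega

end Update

variable [Fintype V]

theorem one_le_ecc [Nontrivial V] (hG : G.Connected) (v : V) : 1 ≤ ecc G v := by
  obtain ⟨w, hw⟩ := exists_ne v
  exact (hG.pos_dist_of_ne hw.symm).trans_le (Finset.le_sup (f := G.dist v) (Finset.mem_univ w))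

theorem broadcastIrredundance_eq_cost (hf : IsMaximalIrredundant G f)
    (hmin : ∀ g, IsMaximalIrredundant G g → cost f ≤ cost g) :
    broadcastIrredundance G = cost f :=
  le_antisymm (Nat.sInf_le ⟨f, hf, rfl⟩) <|
    le_csInf ⟨_, f, hf, rfl⟩ fun _ ⟨g, hg, hc⟩ => hc ▸ hmin g hg

theorem isMaximalIrredundant_of_forall_exists_dist_le_one (hf : IsIrredundant G f)
    (hdom : ∀ u, ∃ s, f s = 1 ∧ G.dist u s ≤ 1) : IsMaximalIrredundant G f := by
  refine ⟨hf, fun g hg hfg => funext fun v => ?_⟩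
  by_contra hne
  have hlt : f v < g v := (hfg v).lt_of_ne (Ne.symm hne)
  have hpriv : ∀ x ∈ privateNbhd G g v, f v = 1 ∧ G.dist x v ≤ 1 := by
    intro x hx
    obtain ⟨s, hs, hxs⟩ := hdom x
    have hgs := hfg s
    obtain rfl : s = v := eq_of_mem_hears_of_mem_privateNbhd hx ⟨by omega, by omega⟩
    exact ⟨hs, hxs⟩
  rcases privateBorder_nonempty_iff.1 (hg.2 v (by omega)) with ⟨hgv, hPN⟩ | ⟨x, hx, hxv⟩
  · have := (hpriv v (hPN ▸ rfl)).1
    omega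
  · have := hpriv x hx
    omega

theorem IsMaximalIrredundant.exists_privateBorder_eq_empty (hf : IsMaximalIrredundant G f)
    (hg : IsBroadcast G g) (hfg : ∀ v, f v ≤ g v) (hne : g ≠ f) :
    ∃ w, 1 ≤ g w ∧ privateBorder G g w = ∅ := by
  by_contra! h
  exact hne (hf.2 g ⟨hg, h⟩ hfg)

variable [DecidableEq V]

theorem exists_mem_privateNbhd_dist_eq_of_privateBorder_update_one_eq_empty
    (hf : IsIrredundant G f) (hu : hears G f u = ∅) (hwu : w ≠ u)
    (hPB : privateBorder G (update f u 1) w = ∅) (hw1 : 1 ≤ f w) :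
    ∃ b ∈ privateNbhd G f w, G.dist b w = f w := by
  refine (privateBorder_nonempty_iff.1 (hf.2 w hw1)).resolve_left fun ⟨hfw, hPN⟩ => ?_
  have hfu := eq_zero_of_hears_eq_empty hu
  have hwu' : 1 < G.dist w u := by
    have := lt_dist_of_hears_eq_empty hu hw1
    rwa [dist_comm, hfw] at this
  refine (privateBorder_eq_empty_iff.1 hPB).1 (by rwa [update_of_ne hwu]) (Set.ext fun x => ?_)
  rw [mem_privateNbhd_update_one hfu hwu, hPN, Set.mem_singleton_iff]
  exact ⟨And.left, fun h => ⟨h, h ▸ hwu'⟩⟩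

theorem IsMaximalIrredundant.exists_lt_dist_of_hears_eq_empty [Nontrivial V]
    (hG : G.Connected) (hf : IsMaximalIrredundant G f) (hu : hears G f u = ∅) :
    ∃ w, 1 ≤ f w ∧ f w < G.dist u w ∧ (∃ b ∈ privateNbhd G f w, G.dist b w = f w) ∧
      (∀ x ∈ privateNbhd G f w, G.dist x w = f w → G.Adj x u) ∧
      (f w = 1 → ∃ w' ≠ w, w' ∈ hears G f w) := by
  have hfu := eq_zero_of_hears_eq_empty hu
  have hbr : IsBroadcast G (update f u 1) := fun v => by
    rcases eq_or_ne v u with rfl | hvu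
    · simpa using one_le_ecc hG v
    · simpa [hvu] using hf.1.1 v
  have hle : ∀ v, f v ≤ update f u 1 v := fun v => by
    rcases eq_or_ne v u with rfl | hvu <;> simp [*]
  have hne : update f u 1 ≠ f := fun h => by simpa [hfu] using congrFun h u
  obtain ⟨w, hw1, hPB⟩ := hf.exists_privateBorder_eq_empty hbr hle hne
  have hwu : w ≠ u := by
    rintro rfl
    exact (privateBorder_update_one_self_nonempty hG hu).ne_empty hPB
  rw [update_of_ne hwu] at hw1
  exact ⟨w, hw1, lt_dist_of_hears_eq_empty hu hw1,
    exists_mem_privateNbhd_dist_eq_of_privateBorder_update_one_eq_empty hf.1 hu hwu hPB hw1,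
    fun x hx => adj_of_privateBorder_update_one_eq_empty hG hu hwu hPB hx,
    exists_ne_mem_hears_of_privateBorder_update_one_eq_empty hG hu hwu hPB⟩

end Broadcast

namespace SimpleGraph

variable {n : ℕ}

theorem pathGraph_natDist_le_length {u v : Fin n} (p : (pathGraph n).Walk u v) :
    Nat.dist u v ≤ p.length := by
  induction p with
  | nil => simp
  | cons h _ ih =>
    have := pathGraph_adj.1 h
    simp only [Walk.length_cons, Nat.dist] at ih ⊢
    omega

theorem pathGraph_dist (u v : Fin n) : (pathGraph n).dist u v = Nat.dist u v := by
  refine le_antisymm ?_ ?_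
  · suffices h : ∀ k (u v : Fin n), (u : ℕ) + k = v → (pathGraph n).dist u v ≤ k by
      rcases le_total (u : ℕ) v with huv | huv
      · exact (h _ u v (Nat.add_sub_of_le huv)).trans_eq (by simp [Nat.dist]; omega)
      · rw [dist_comm]
        exact (h _ v u (Nat.add_sub_of_le huv)).trans_eq (by simp [Nat.dist]; omega)
    intro k
    induction k with
    | zero =>
      intro u v h
      obtain rfl : u = v := Fin.ext h
      simp
    | succ k ih =>
      intro u v h
      let w : Fin n := ⟨u + k, by omega⟩
      have hwv : (pathGraph n).dist w v = 1 :=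
        dist_eq_one_iff_adj.2 (pathGraph_adj.2 (Or.inl (by simp only [w]; omega)))
      have := (pathGraph_preconnected n w v).dist_triangle_right u
      have := ih u w rfl
      omega
  · obtain ⟨p, hp⟩ := (pathGraph_preconnected n u v).exists_walk_length_eq_dist
    exact hp ▸ pathGraph_natDist_le_length p

theorem pathGraph_connected_of_pos (hn : 0 < n) : (pathGraph n).Connected :=
  @Connected.mk _ _ (pathGraph_preconnected n) (Fin.pos_iff_nonempty.1 hn)

theorem pathGraph_adj_eq_of_dist_lt {b w u u' : Fin n} (hbw : b ≠ w) (hu : (pathGraph n).Adj b u)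
    (hu' : (pathGraph n).Adj b u') (h : (pathGraph n).dist b w < (pathGraph n).dist u w)
    (h' : (pathGraph n).dist b w < (pathGraph n).dist u' w) : u = u' := by
  rw [pathGraph_adj] at hu hu'
  rw [Ne, Fin.ext_iff] at hbw
  simp only [pathGraph_dist, Nat.dist] at h h'
  exact Fin.ext (by omega)

theorem ncard_setOf_pathGraph_dist_le (v : Fin n) (k : ℕ) :
    {x | (pathGraph n).dist x v ≤ k}.ncard ≤ 2 * k + 1 := by
  calc _ ≤ (Finset.Icc ((v : ℕ) - k) (v + k) : Set ℕ).ncard := by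
        refine Set.ncard_le_ncard_of_injOn Fin.val (fun x hx => ?_) Fin.val_injective.injOn
          (Set.toFinite _)
        simp only [Set.mem_ofPred_eq, pathGraph_dist, Nat.dist] at hx
        simp only [Finset.coe_Icc, Set.mem_Icc]
        omega
    _ ≤ 2 * k + 1 := by rw [Set.ncard_coe_finset, Nat.card_Icc]; omega

end SimpleGraph

namespace Broadcast

open SimpleGraph

section Counting

variable {V : Type*} [Fintype V] {G : SimpleGraph V} {f : V → ℕ}

theorem sum_ncard_hears :
    ∑ x, (hears G f x).ncard = ∑ v, {x | v ∈ hears G f x}.ncard := by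
  classical
  simp only [hears, Set.mem_ofPred_eq, Set.ncard_eq_toFinset_card', Set.toFinset_ofPred,
    Finset.card_filter]
  exact Finset.sum_comm

theorem ncard_hears_nonempty_add_ncard_le_sum :
    {x | (hears G f x).Nonempty}.ncard + {x | 2 ≤ (hears G f x).ncard}.ncard ≤
      ∑ x, (hears G f x).ncard := by
  classical
  simp only [Set.ncard_eq_toFinset_card', Set.toFinset_ofPred, Finset.card_filter,
    ← Finset.sum_add_distrib]
  refine Finset.sum_le_sum fun x _ => ?_
  simp only [← Set.ncard_pos (Set.toFinite (hears G f x))]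
  have := Set.ncard_eq_toFinset_card' (hears G f x)
  split_ifs <;> omega

end Counting

variable {n : ℕ} {f : Fin n → ℕ}

theorem ncard_setOf_mem_hears_pathGraph_le (v : Fin n) :
    {x | v ∈ hears (pathGraph n) f x}.ncard ≤ if 1 ≤ f v then 2 * f v + 1 else 0 := by
  split_ifs with hv
  · exact (Set.ncard_le_ncard fun x hx => hx.2).trans (ncard_setOf_pathGraph_dist_le v (f v))
  · simp [mem_hears, hv]

theorem ncard_hears_eq_empty_le_pathGraph (hn : 2 ≤ n)
    (hf : IsMaximalIrredundant (pathGraph n) f) :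
    {u | hears (pathGraph n) f u = ∅}.ncard ≤
      {w | 2 ≤ f w}.ncard + {x | 2 ≤ (hears (pathGraph n) f x).ncard}.ncard := by
  have : Nontrivial (Fin n) := Fin.nontrivial_iff_two_le.2 hn
  choose! W hW using fun u (hu : u ∈ {u | hears (pathGraph n) f u = ∅}) =>
    hf.exists_lt_dist_of_hears_eq_empty (pathGraph_connected_of_pos (by omega)) hu
  refine (Set.ncard_le_ncard_of_injOn W ?_ ?_ (Set.toFinite _)).trans (Set.ncard_union_le _ _)
  · intro u hu
    obtain ⟨hw1, -, -, -, hone⟩ := hW u hu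
    by_cases h : f (W u) = 1
    · obtain ⟨w', hw', hw'h⟩ := hone h
      exact Or.inr <| (Set.one_lt_ncard_iff (Set.toFinite _)).2
        ⟨W u, w', mem_hears_self hw1, hw'h, hw'.symm⟩
    · exact Or.inl (show 2 ≤ f (W u) by omega)
  · intro u hu u' hu' heq
    obtain ⟨hw1, hlt, ⟨b, hb, hbw⟩, hadj, -⟩ := hW u hu
    obtain ⟨-, hlt', -, hadj', -⟩ := hW u' hu'
    rw [← heq] at hlt' hadj'
    have hbW : b ≠ W u := by
      rintro rfl
      rw [dist_self] at hbw
      omega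
    exact pathGraph_adj_eq_of_dist_lt hbW (hadj b hb hbw) (hadj' b hb hbw) (by omega) (by omega)

theorem le_three_mul_cost_pathGraph (hn : 2 ≤ n) (hf : IsMaximalIrredundant (pathGraph n) f) :
    n ≤ 3 * cost f := by
  classical
  have hsplit : {x | (hears (pathGraph n) f x).Nonempty}.ncard +
      {u | hears (pathGraph n) f u = ∅}.ncard = n := by
    have h := Set.ncard_add_ncard_compl {x | (hears (pathGraph n) f x).Nonempty}
    simp only [Nat.card_eq_fintype_card, Fintype.card_fin] at h
    convert h using 3
    ext
    simp [Set.not_nonempty_iff_eq_empty]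
  have hballs : ∑ x, (hears (pathGraph n) f x).ncard ≤ ∑ v, if 1 ≤ f v then 2 * f v + 1 else 0 :=
    sum_ncard_hears.trans_le (Finset.sum_le_sum fun v _ => ncard_setOf_mem_hears_pathGraph_le v)
  have hstrong : {w | 2 ≤ f w}.ncard ≤ ∑ v, (f v - 1) := by
    simp only [Set.ncard_eq_toFinset_card', Set.toFinset_ofPred, Finset.card_filter]
    exact Finset.sum_le_sum fun v _ => by split_ifs <;> omega
  have := ncard_hears_nonempty_add_ncard_le_sum (G := pathGraph n) (f := f)
  have := ncard_hears_eq_empty_le_pathGraph hn hf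
  calc n ≤ ∑ v, ((if 1 ≤ f v then 2 * f v + 1 else 0) + (f v - 1)) := by
        rw [Finset.sum_add_distrib]; omega
    _ = 3 * cost f := by
        rw [cost, Finset.mul_sum]
        exact Finset.sum_congr rfl fun v _ => by split_ifs <;> omega

/-- Vertex `x_{i+1}` of `P_n` is `i : Fin n`: strength `1` on `x_2, x_5, x_8, …`, and on `x_n` when
`n ≡ 1 [MOD 3]`, which no other broadcast vertex reaches. -/
def everyThirdBroadcast (n : ℕ) (i : Fin n) : ℕ :=
  if (i : ℕ) % 3 = 1 ∨ ((i : ℕ) = n - 1 ∧ n % 3 = 1) then 1 else 0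

theorem everyThirdBroadcast_le_one (i : Fin n) : everyThirdBroadcast n i ≤ 1 := by
  unfold everyThirdBroadcast
  split_ifs <;> omega

theorem mem_hears_everyThirdBroadcast {x v : Fin n} :
    v ∈ hears (pathGraph n) (everyThirdBroadcast n) x ↔
      ((v : ℕ) % 3 = 1 ∨ ((v : ℕ) = n - 1 ∧ n % 3 = 1)) ∧ Nat.dist x v ≤ 1 := by
  rw [mem_hears, pathGraph_dist, everyThirdBroadcast]
  split_ifs with h <;> simp [h]

theorem exists_everyThirdBroadcast_eq_one_dist_le_one (u : Fin n) :
    ∃ s, everyThirdBroadcast n s = 1 ∧ (pathGraph n).dist u s ≤ 1 := by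
  obtain ⟨s, hsn, hs, hus⟩ : ∃ s, s < n ∧ (s % 3 = 1 ∨ (s = n - 1 ∧ n % 3 = 1)) ∧
      Nat.dist u s ≤ 1 := by
    have hu := u.isLt
    simp only [Nat.dist]
    rcases (by omega : (u : ℕ) % 3 = 1 ∨ (u : ℕ) % 3 = 2 ∨ ((u : ℕ) % 3 = 0 ∧ (u : ℕ) = n - 1) ∨
      ((u : ℕ) % 3 = 0 ∧ (u : ℕ) + 1 < n)) with h | h | h | h
    · exact ⟨u, hu, Or.inl h, by omega⟩
    · exact ⟨u - 1, by omega, Or.inl (by omega), by omega⟩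
    · exact ⟨u, hu, Or.inr ⟨h.2, by omega⟩, by omega⟩
    · exact ⟨u + 1, h.2, Or.inl (by omega), by omega⟩
  exact ⟨⟨s, hsn⟩, if_pos hs, (pathGraph_dist u _).trans_le hus⟩

theorem isIrredundant_everyThirdBroadcast (hn : 2 ≤ n) :
    IsIrredundant (pathGraph n) (everyThirdBroadcast n) := by
  have : Nontrivial (Fin n) := Fin.nontrivial_iff_two_le.2 hn
  refine ⟨fun v => (everyThirdBroadcast_le_one v).trans
    (one_le_ecc (pathGraph_connected_of_pos (by omega)) v), fun v hv => ?_⟩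
  have hv1 : everyThirdBroadcast n v = 1 := le_antisymm (everyThirdBroadcast_le_one v) hv
  have hvS : (v : ℕ) % 3 = 1 ∨ ((v : ℕ) = n - 1 ∧ n % 3 = 1) := by
    by_contra h
    simp [everyThirdBroadcast, h] at hv1
  have hvn := v.isLt
  rw [privateBorder_nonempty_iff]
  rcases hvS with h | h
  · refine Or.inr ⟨⟨v - 1, by omega⟩, Set.ext fun w => ?_, ?_⟩
    · rw [mem_hears_everyThirdBroadcast, Set.mem_singleton_iff, Fin.ext_iff]
      simp only [Nat.dist]
      omega
    · rw [pathGraph_dist, hv1]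
      simp only [Nat.dist]
      omega
  · refine Or.inl ⟨hv1, Set.eq_singleton_iff_unique_mem.2 ⟨Set.ext fun w => ?_, fun x hx => ?_⟩⟩
    · rw [mem_hears_everyThirdBroadcast, Set.mem_singleton_iff, Fin.ext_iff]
      simp only [Nat.dist]
      omega
    · -- the only other candidate `x = x_{n-1}` also hears `x_{n-2}`
      by_contra hxv
      have hxv' := (mem_hears_everyThirdBroadcast.1 (mem_hears_of_mem_privateNbhd hx)).2
      rw [Fin.ext_iff] at hxv
      simp only [Nat.dist] at hxv'
      have hy := eq_of_mem_hears_of_mem_privateNbhd hx (v := v) (w := ⟨n - 3, by omega⟩)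
        (mem_hears_everyThirdBroadcast.2
          ⟨Or.inl (by simp only; omega), by simp only [Nat.dist]; omega⟩)
      rw [Fin.ext_iff] at hy
      simp only at hy
      omega

theorem sum_range_ite_mod_three_eq_one (m : ℕ) :
    ∑ i ∈ Finset.range m, (if i % 3 = 1 then 1 else 0) = (m + 1) / 3 := by
  induction m with
  | zero => simp
  | succ m ih =>
    rw [Finset.sum_range_succ, ih]
    split_ifs <;> omega

theorem cost_everyThirdBroadcast : cost (everyThirdBroadcast n) = (n + 2) / 3 := by
  have hsplit : ∀ i : ℕ, (if i % 3 = 1 ∨ (i = n - 1 ∧ n % 3 = 1) then 1 else 0) =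
      (if i % 3 = 1 then 1 else 0) + if n % 3 = 1 then (if i = n - 1 then 1 else 0) else 0 := by
    intro i
    split_ifs <;> omega
  unfold cost everyThirdBroadcast
  rw [Fin.sum_univ_eq_sum_range (fun i => if i % 3 = 1 ∨ (i = n - 1 ∧ n % 3 = 1) then 1 else 0),
    Finset.sum_congr rfl fun i _ => hsplit i, Finset.sum_add_distrib,
    sum_range_ite_mod_three_eq_one]
  split_ifs with h
  · rw [Finset.sum_ite_eq', if_pos (Finset.mem_range.2 (by omega))]
    omega
  · simp only [Finset.sum_const_zero]
    omega

end Broadcast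

open Broadcast in
/-- For every n ≥ 3, there exists an ir_b-broadcast f on P_n such that
H_f(x_1) ≠ ∅ and H_f(x_n) ≠ ∅. -/
theorem exists_irb_broadcast_endpoints_dominated_pathGraph (n : ℕ) (hn : 3 ≤ n) :
    ∃ f : Fin n → ℕ, IsMaximalIrredundant (SimpleGraph.pathGraph n) f ∧
      cost f = broadcastIrredundance (SimpleGraph.pathGraph n) ∧
      hears (SimpleGraph.pathGraph n) f ⟨0, by omega⟩ ≠ ∅ ∧
      hears (SimpleGraph.pathGraph n) f ⟨n - 1, by omega⟩ ≠ ∅ := by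
  have hdom := exists_everyThirdBroadcast_eq_one_dist_le_one (n := n)
  have hmax := isMaximalIrredundant_of_forall_exists_dist_le_one
    (isIrredundant_everyThirdBroadcast (by omega)) hdom
  have hears_ne (u : Fin n) : hears (SimpleGraph.pathGraph n) (everyThirdBroadcast n) u ≠ ∅ := by
    obtain ⟨s, hs, hus⟩ := hdom u
    exact Set.nonempty_iff_ne_empty.1 ⟨s, by omega, by omega⟩
  refine ⟨everyThirdBroadcast n, hmax, (broadcastIrredundance_eq_cost hmax fun g hg => ?_).symm,
    hears_ne _, hears_ne _⟩
  have := le_three_mul_cost_pathGraph (by omega) hg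
  rw [cost_everyThirdBroadcast]
  omega
end
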